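/- Let n ≥ 1, let s ∈ ℂ with Re(s) > 0, and let ψ_1, ψ_2 : ℚ_p^n → ℂ be Schwartz–Bruhat functions. Then the double integrals below are absolutely convergent and satisfy ∫_{ℚ_p^n}∫_{ℚ_p^n} ψ_1(x)·(ψ_2(z) − ψ_2(x))·|z − x|_n^{−s−n} dμ_n(z) dμ_n(x) = −(1/2)·∫_{ℚ_p^n}∫_{ℚ_p^n} (ψ_1(z) − ψ_1(x))·(ψ_2(z) − ψ_2(x))·|z − x|_n^{−s−n} dμ_n(z) dμ_n(x); in particular the left-hand side is symmetric under exchanging ψ_1 and ψ_2 (formal self-adjointness of the max-norm Vladimirov derivative on ℚ_p^n). -/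

import Mathlib

/-!
The integrand `ψ₁(x)(ψ₂(z) - ψ₂(x))|z - x|^{-s-n}` vanishes when `|z - x|` is below a uniform
radius `δ` of local constancy of `ψ₂`, and when `x` lies outside the compact support of `ψ₁`.
It is therefore dominated by `1_{supp ψ₁}(x) · 1_{|z - x| ≥ δ} |z - x|^{-Re s - n}`, which is
integrable because `μ_n(|u| ≤ r) ≤ p^n r^n` for `r ≥ 1`: over the dyadic shells
`δ 2^j ≤ |u| < δ 2^{j+1}` the integrals decay like `2^{-j Re s}`. Writing `F(x, z)` for the
integrand, the symmetry of the kernel gives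
`(ψ₁(z) - ψ₁(x))(ψ₂(z) - ψ₂(x))|z - x|^{-s-n} = -(F(x, z) + F(z, x))`,
and Fubini turns this into the identity.
-/

open MeasureTheory Real

noncomputable section

variable (p : ℕ) [Fact p.Prime]

instance : MeasurableSpace ℚ_[p] := borel _
instance : BorelSpace ℚ_[p] := ⟨rfl⟩

/-- `ℤ_p = {x : ℚ_p | ‖x‖ ≤ 1}` as a positive compact subset of `ℚ_p`. -/
def zpCompacts : TopologicalSpace.PositiveCompacts ℚ_[p] where
  carrier := Metric.closedBall 0 1
  isCompact' := isCompact_closedBall 0 1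
  interior_nonempty' := by
    refine ⟨0, interior_maximal Metric.ball_subset_closedBall Metric.isOpen_ball ?_⟩
    simp

/-- The additive Haar measure `μ` on `ℚ_p`, normalized so that `μ(ℤ_p) = 1`
(this normalization is `Measure.addHaarMeasure_self`). -/
def padicHaar : Measure ℚ_[p] := Measure.addHaarMeasure (zpCompacts p)

/-- The `p`-adic fractional part `{x}_p`: the rational in `[0,1) ∩ ℤ[1/p]`
with `x - {x}_p ∈ ℤ_p`.  It is computed from the digit expansion of `p^n·x`
where `n = max(0, -v_p(x))`; the `else` branch is never taken. -/
def padicFract (x : ℚ_[p]) : ℚ :=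
  if hx : ‖(p : ℚ_[p]) ^ (-x.valuation).toNat * x‖ ≤ 1 then
    ((PadicInt.appr ⟨(p : ℚ_[p]) ^ (-x.valuation).toNat * x, hx⟩ (-x.valuation).toNat : ℕ) : ℚ)
      / (p : ℚ) ^ (-x.valuation).toNat
  else 0

/-- The standard additive character `χ(x) = e^{2πi{x}_p}` of `ℚ_p`. -/
def padicChar (x : ℚ_[p]) : ℂ :=
  Complex.exp (2 * π * Complex.I * (padicFract p x : ℂ))

/-- The Gelfand–Graev Gamma function `Γ_p(s) = (1 - p^{s-1})/(1 - p^{-s})` of `ℚ_p`. -/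
def gammaP (s : ℂ) : ℂ := (1 - (p : ℂ) ^ (s - 1)) / (1 - (p : ℂ) ^ (-s))

instance : SigmaFinite (padicHaar p) := Measure.sigmaFinite_addHaarMeasure

/-- The product additive Haar measure `μ_n` on `ℚ_p^n`, normalized so that `μ_n(ℤ_p^n) = 1`.
The norm `‖x‖` on `Fin n → ℚ_[p]` is the maximum norm `|x|_n = max_α |x_α|_p`. -/
def padicHaarPi (n : ℕ) : Measure (Fin n → ℚ_[p]) := Measure.pi fun _ => padicHaar p

open Metric Set

theorem IsLocallyConstant.exists_pos_forall_dist_lt_eq {X β : Type*} [PseudoMetricSpace X]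
    [Zero β] {f : X → β} (hf : IsLocallyConstant f) (hsupp : HasCompactSupport f) :
    ∃ δ > 0, ∀ x y, dist x y < δ → f x = f y := by
  obtain ⟨δ, hδ, hball⟩ := lebesgue_number_lemma_of_metric hsupp (c := fun x => {y | f y = f x})
    (fun x => hf.isOpen_fiber _) fun x _ => mem_iUnion.2 ⟨x, rfl⟩
  have of_mem_tsupport : ∀ x y, dist x y < δ → x ∈ tsupport f → f x = f y := by
    intro x y hxy hx
    obtain ⟨i, hi⟩ := hball x hx
    exact (hi (mem_ball_self hδ)).trans (hi (mem_ball_comm.1 hxy)).symm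
  refine ⟨δ, hδ, fun x y hxy => ?_⟩
  by_cases hx : x ∈ tsupport f
  · exact of_mem_tsupport x y hxy hx
  by_cases hy : y ∈ tsupport f
  · exact (of_mem_tsupport y x (dist_comm x y ▸ hxy) hy).symm
  rw [image_eq_zero_of_notMem_tsupport hx, image_eq_zero_of_notMem_tsupport hy]

theorem integrableOn_norm_rpow_of_measure_closedBall_le {E : Type*} [SeminormedAddCommGroup E]
    [MeasurableSpace E] [OpensMeasurableSpace E] {μ : Measure E} {C : ENNReal} {d a δ : ℝ}
    (hC : C ≠ ⊤) (hd : 0 ≤ d) (ha : a < -d) (hδ : 0 < δ)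
    (hgrowth : ∀ r, 1 ≤ r → μ (closedBall 0 r) ≤ C * ENNReal.ofReal (r ^ d)) :
    IntegrableOn (fun u => ‖u‖ ^ a) {u | δ ≤ ‖u‖} μ := by
  set c := max δ 1
  let shell : ℕ → Set E := fun j => {u | δ * 2 ^ j ≤ ‖u‖ ∧ ‖u‖ < δ * 2 ^ (j + 1)}
  have hcover : {u : E | δ ≤ ‖u‖} ⊆ ⋃ j, shell j := by
    intro u hu
    obtain ⟨j, hj, hj'⟩ := exists_nat_pow_near ((one_le_div hδ).2 hu) one_lt_two
    refine mem_iUnion.2 ⟨j, ?_, ?_⟩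
    · rwa [le_div_iff₀' hδ] at hj
    · rwa [div_lt_iff₀' hδ] at hj'
  have hshell_measure : ∀ j, μ (shell j) ≤ C * ENNReal.ofReal ((c * 2 ^ (j + 1)) ^ d) := by
    refine fun j => (measure_mono fun u hu => ?_).trans (hgrowth _ ?_)
    · exact mem_closedBall_zero_iff.2 <| hu.2.le.trans <| by gcongr; exact le_max_left _ _
    · exact one_le_mul_of_one_le_of_one_le (le_max_right _ _) (one_le_pow₀ one_le_two)
  have hshell_lt_top : ∀ j, μ (shell j) < ⊤ := fun j =>
    (hshell_measure j).trans_lt (ENNReal.mul_lt_top hC.lt_top ENNReal.ofReal_lt_top)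
  have hshell_bound : ∀ j, ∀ u ∈ shell j, ‖‖u‖ ^ a‖ ≤ (δ * 2 ^ j) ^ a := fun j u hu => by
    rw [Real.norm_of_nonneg (by positivity)]
    exact Real.rpow_le_rpow_of_nonpos (by positivity) hu.1 (by linarith)
  have hshell_integral : ∀ j, ∫ u in shell j, ‖‖u‖ ^ a‖ ∂μ
      ≤ C.toReal * δ ^ a * (2 * c) ^ d * (2 ^ (a + d)) ^ j := by
    intro j
    calc ∫ u in shell j, ‖‖u‖ ^ a‖ ∂μ
        ≤ (δ * 2 ^ j) ^ a * μ.real (shell j) :=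
          (le_abs_self _).trans <| norm_setIntegral_le_of_norm_le_const (hshell_lt_top j)
            fun u hu => (norm_norm _).trans_le (hshell_bound j u hu)
      _ ≤ (δ * 2 ^ j) ^ a * (C.toReal * (c * 2 ^ (j + 1)) ^ d) := by
          gcongr
          refine (ENNReal.toReal_mono (by finiteness) (hshell_measure j)).trans_eq ?_
          rw [ENNReal.toReal_mul, ENNReal.toReal_ofReal (by positivity)]
      _ = C.toReal * δ ^ a * (2 * c) ^ d * (2 ^ (a + d)) ^ j := by
          rw [Real.rpow_pow_comm zero_le_two, Real.rpow_add (by positivity), pow_succ,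
            Real.mul_rpow (by positivity) (by positivity),
            Real.mul_rpow (by positivity) (by positivity),
            Real.mul_rpow (by positivity) (by positivity),
            Real.mul_rpow (by positivity) (by positivity)]
          ring
  have hratio : 2 ^ (a + d) < (1 : ℝ) := Real.rpow_lt_one_of_one_lt_of_neg one_lt_two (by linarith)
  refine IntegrableOn.mono_set ?_ hcover
  refine integrableOn_iUnion_of_summable_integral_norm (fun j => ?_) ?_
  · exact Measure.integrableOn_of_bounded (hshell_lt_top j).ne
      (continuous_norm.measurable.pow_const a).aestronglyMeasurable
      (ae_restrict_of_forall_mem ((measurableSet_le measurable_const continuous_norm.measurable).inter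
        (measurableSet_lt continuous_norm.measurable measurable_const)) (hshell_bound j))
  · exact .of_nonneg_of_le (fun j => integral_nonneg fun _ => norm_nonneg _) hshell_integral
      ((summable_geometric_of_lt_one (by positivity) hratio).mul_left _)

theorem integrable_mul_cpow_norm_sub {E : Type*} [NormedAddCommGroup E] [MeasurableSpace E]
    [BorelSpace E] [SecondCountableTopology E] {μ : Measure E} [SFinite μ] [μ.IsAddRightInvariant]
    {C : ENNReal} {d δ M : ℝ} {w : ℂ} {B : Set E} {F : E × E → ℂ}
    (hC : C ≠ ⊤) (hd : 0 ≤ d) (hw : w.re < -d) (hδ : 0 < δ)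
    (hgrowth : ∀ r, 1 ≤ r → μ (closedBall 0 r) ≤ C * ENNReal.ofReal (r ^ d))
    (hB : MeasurableSet B) (hμB : μ B ≠ ⊤)
    (hF : AEStronglyMeasurable F (μ.prod μ)) (hFM : ∀ q, ‖F q‖ ≤ M)
    (hF_diag : ∀ q, ‖q.2 - q.1‖ < δ → F q = 0) (hF_supp : ∀ q, F q ≠ 0 → q.1 ∈ B) :
    Integrable (fun q => F q * (‖q.2 - q.1‖ : ℂ) ^ w) (μ.prod μ) := by
  let T : E → ℝ := {u | δ ≤ ‖u‖}.indicator fun u => ‖u‖ ^ w.re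
  have hT : Integrable T μ := (integrable_indicator_iff
    (measurableSet_le measurable_const continuous_norm.measurable)).2
    (integrableOn_norm_rpow_of_measure_closedBall_le hC hd hw hδ hgrowth)
  have hdom : Integrable (fun q : E × E => B.indicator 1 q.2 * T (q.1 - q.2)) (μ.prod μ) :=
    (integrable_indicator_iff hB).2 (integrableOn_const hμB) |>.convolution_integrand
      (ContinuousLinearMap.mul ℝ ℝ) hT
  refine (hdom.swap.const_mul M).mono'
    (hF.mul (by fun_prop : Measurable fun q : E × E => (‖q.2 - q.1‖ : ℂ) ^ w).aestronglyMeasurable)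
    (Filter.Eventually.of_forall fun q => ?_)
  have hM : 0 ≤ M := (norm_nonneg _).trans (hFM q)
  have hT_nonneg : 0 ≤ T (q.2 - q.1) := indicator_nonneg (fun u _ => by positivity) _
  simp only [Function.comp_apply, Prod.fst_swap, Prod.snd_swap]
  by_cases hq : F q = 0
  · rw [hq, zero_mul, norm_zero]
    exact mul_nonneg hM (mul_nonneg (indicator_nonneg (fun _ _ => zero_le_one) _) hT_nonneg)
  have hdist : δ ≤ ‖q.2 - q.1‖ := not_lt.1 fun h => hq (hF_diag q h)
  have hkernel : ‖(‖q.2 - q.1‖ : ℂ) ^ w‖ = T (q.2 - q.1) := by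
    rw [Complex.norm_cpow_eq_rpow_re_of_pos (hδ.trans_le hdist)]
    exact (indicator_of_mem (show q.2 - q.1 ∈ {u : E | δ ≤ ‖u‖} from hdist)
      fun u : E => ‖u‖ ^ w.re).symm
  rw [norm_mul, hkernel, indicator_of_mem (hF_supp q hq), Pi.one_apply, one_mul]
  exact mul_le_mul_of_nonneg_right (hFM q) hT_nonneg

theorem integral_integral_mul_sub_eq_neg_half {X : Type*} [MeasurableSpace X] {μ : Measure X}
    [SFinite μ] {f g : X → ℂ} {K : X → X → ℂ} (hK : ∀ x z, K x z = K z x)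
    (hint : Integrable (fun q : X × X => f q.1 * (g q.2 - g q.1) * K q.1 q.2) (μ.prod μ)) :
    Integrable (fun q : X × X => (f q.2 - f q.1) * (g q.2 - g q.1) * K q.1 q.2) (μ.prod μ) ∧
    ∫ x, ∫ z, f x * (g z - g x) * K x z ∂μ ∂μ
      = -(1 / 2) * ∫ x, ∫ z, (f z - f x) * (g z - g x) * K x z ∂μ ∂μ := by
  set φ : X × X → ℂ := fun q => f q.1 * (g q.2 - g q.1) * K q.1 q.2
  have hsymm : (fun q : X × X => (f q.2 - f q.1) * (g q.2 - g q.1) * K q.1 q.2)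
      = fun q => -(φ q + φ q.swap) := by
    ext q
    simp only [φ, Prod.fst_swap, Prod.snd_swap, hK q.2 q.1]
    ring
  have hswap : Integrable (fun q => φ q.swap) (μ.prod μ) := hint.swap
  have hint' : Integrable (fun q : X × X => (f q.2 - f q.1) * (g q.2 - g q.1) * K q.1 q.2)
      (μ.prod μ) := hsymm ▸ (hint.add hswap).neg
  refine ⟨hint', ?_⟩
  calc ∫ x, ∫ z, f x * (g z - g x) * K x z ∂μ ∂μ = ∫ q, φ q ∂μ.prod μ :=
        (integral_prod φ hint).symm
    _ = -(1 / 2) * ∫ q, -(φ q + φ q.swap) ∂μ.prod μ := by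
      rw [integral_neg, integral_add hint hswap, integral_prod_swap φ]
      ring
    _ = _ := by rw [← hsymm, integral_prod _ hint']

instance : (padicHaar p).IsAddHaarMeasure := Measure.isAddHaarMeasure_addHaarMeasure _

instance (n : ℕ) : (padicHaarPi p n).IsAddHaarMeasure := Measure.pi.isAddHaarMeasure _

variable {p}

theorem Padic.closedBall_zero_pow_subset_iUnion (j : ℕ) :
    closedBall (0 : ℚ_[p]) (p ^ j)
      ⊆ ⋃ c ∈ Finset.range (p ^ j), closedBall ((c : ℚ_[p]) / p ^ j) 1 := by
  intro x hx
  have hpj : ‖(p : ℚ_[p]) ^ j‖ = (p : ℝ) ^ (-(j : ℤ)) := Padic.norm_p_pow j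
  have hy : ‖(p : ℚ_[p]) ^ j * x‖ ≤ 1 := by
    rw [norm_mul, hpj, zpow_neg, zpow_natCast]
    exact inv_mul_le_one_of_le₀ (mem_closedBall_zero_iff.1 hx) (by positivity)
  set y : ℤ_[p] := ⟨_, hy⟩
  have happr : ‖y - y.appr j‖ ≤ (p : ℝ) ^ (-(j : ℤ)) :=
    (PadicInt.norm_le_pow_iff_mem_span_pow _ j).2 (PadicInt.appr_spec j y)
  refine mem_iUnion₂.2 ⟨y.appr j, Finset.mem_range.2 (PadicInt.appr_lt y j), ?_⟩
  have hp0 : (p : ℚ_[p]) ^ j ≠ 0 :=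
    pow_ne_zero _ (Nat.cast_ne_zero.2 (Fact.out : p.Prime).ne_zero)
  have hdiff : x - (y.appr j : ℚ_[p]) / p ^ j = ((y - y.appr j : ℤ_[p]) : ℚ_[p]) / p ^ j := by
    rw [PadicInt.coe_sub, PadicInt.coe_natCast, eq_div_iff hp0]
    field_simp
    ring
  rw [mem_closedBall, dist_eq_norm, hdiff, norm_div, div_le_one (norm_pos_iff.2 hp0), hpj]
  exact happr

theorem padicHaar_closedBall_pow_le (j : ℕ) :
    padicHaar p (closedBall 0 (p ^ j)) ≤ (p : ENNReal) ^ j := by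
  have hunit : ∀ c : ℚ_[p], padicHaar p (closedBall c 1) = 1 := fun c => by
    rw [Measure.addHaar_closedBall_center]
    exact Measure.addHaarMeasure_self
  calc padicHaar p (closedBall 0 (p ^ j))
      ≤ ∑ c ∈ Finset.range (p ^ j), padicHaar p (closedBall ((c : ℚ_[p]) / p ^ j) 1) :=
        (measure_mono (Padic.closedBall_zero_pow_subset_iUnion j)).trans
          (measure_biUnion_finset_le _ _)
    _ = (p : ENNReal) ^ j := by simp [hunit]

theorem padicHaarPi_closedBall_le (n : ℕ) {r : ℝ} (hr : 1 ≤ r) :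
    padicHaarPi p n (closedBall 0 r) ≤ (p : ENNReal) ^ n * ENNReal.ofReal (r ^ (n : ℝ)) := by
  have hp : (1 : ℝ) < p := by exact_mod_cast (Fact.out : p.Prime).one_lt
  obtain ⟨j, hj, hj'⟩ := exists_nat_pow_near hr hp
  calc padicHaarPi p n (closedBall 0 r)
      ≤ padicHaarPi p n (closedBall 0 (p ^ (j + 1))) :=
        measure_mono (closedBall_subset_closedBall hj'.le)
    _ = ∏ _ : Fin n, padicHaar p (closedBall 0 (p ^ (j + 1))) := by
        rw [closedBall_pi _ (by positivity), padicHaarPi, Measure.pi_pi]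
        rfl
    _ ≤ ((p : ENNReal) ^ (j + 1)) ^ n := by
        rw [Finset.prod_const, Finset.card_univ, Fintype.card_fin]
        gcongr
        exact padicHaar_closedBall_pow_le _
    _ ≤ (p : ENNReal) ^ n * ENNReal.ofReal (r ^ (n : ℝ)) := by
        rw [pow_succ, mul_pow, mul_comm, Real.rpow_natCast, ENNReal.ofReal_pow (by positivity)]
        gcongr
        rw [← ENNReal.ofReal_natCast, ← ENNReal.ofReal_pow (by positivity)]
        exact ENNReal.ofReal_le_ofReal hj

theorem vladimirov_self_adjoint_pi_general (n : ℕ) (s : ℂ) (hs : 0 < s.re)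
    (ψ₁ ψ₂ : (Fin n → ℚ_[p]) → ℂ)
    (hψ₁loc : IsLocallyConstant ψ₁) (hψ₁supp : HasCompactSupport ψ₁)
    (hψ₂loc : IsLocallyConstant ψ₂) (hψ₂supp : HasCompactSupport ψ₂) :
    Integrable (fun q : (Fin n → ℚ_[p]) × (Fin n → ℚ_[p]) =>
      ψ₁ q.1 * (ψ₂ q.2 - ψ₂ q.1) * (‖q.2 - q.1‖ : ℂ) ^ (-s - (n : ℂ)))
      ((padicHaarPi p n).prod (padicHaarPi p n)) ∧
    Integrable (fun q : (Fin n → ℚ_[p]) × (Fin n → ℚ_[p]) =>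
      (ψ₁ q.2 - ψ₁ q.1) * (ψ₂ q.2 - ψ₂ q.1) * (‖q.2 - q.1‖ : ℂ) ^ (-s - (n : ℂ)))
      ((padicHaarPi p n).prod (padicHaarPi p n)) ∧
    (∫ x, ∫ z, ψ₁ x * (ψ₂ z - ψ₂ x) * (‖z - x‖ : ℂ) ^ (-s - (n : ℂ))
        ∂(padicHaarPi p n) ∂(padicHaarPi p n))
      = -(1 / 2) *
        ∫ x, ∫ z, (ψ₁ z - ψ₁ x) * (ψ₂ z - ψ₂ x) * (‖z - x‖ : ℂ) ^ (-s - (n : ℂ))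
          ∂(padicHaarPi p n) ∂(padicHaarPi p n) := by
  have hψ₁cont := hψ₁loc.continuous
  have hψ₂cont := hψ₂loc.continuous
  obtain ⟨δ, hδ, hψ₂δ⟩ := hψ₂loc.exists_pos_forall_dist_lt_eq hψ₂supp
  obtain ⟨M₁, hM₁⟩ := hψ₁cont.bounded_above_of_compact_support hψ₁supp
  obtain ⟨M₂, hM₂⟩ := hψ₂cont.bounded_above_of_compact_support hψ₂supp
  have hint : Integrable (fun q : (Fin n → ℚ_[p]) × (Fin n → ℚ_[p]) =>
      ψ₁ q.1 * (ψ₂ q.2 - ψ₂ q.1) * (‖q.2 - q.1‖ : ℂ) ^ (-s - (n : ℂ)))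
      ((padicHaarPi p n).prod (padicHaarPi p n)) := by
    refine integrable_mul_cpow_norm_sub (M := M₁ * (M₂ + M₂)) (by finiteness) n.cast_nonneg
      (by simp; linarith) hδ (fun r => padicHaarPi_closedBall_le n)
      (isClosed_tsupport ψ₁).measurableSet (IsCompact.measure_lt_top hψ₁supp).ne
      (by fun_prop : Continuous _).aestronglyMeasurable (fun q => ?_) (fun q hclose => ?_)
      (fun q hq => subset_tsupport ψ₁ (left_ne_zero_of_mul hq))
    · rw [norm_mul]
      exact mul_le_mul (hM₁ _) (norm_sub_le_of_le (hM₂ _) (hM₂ _)) (norm_nonneg _)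
        ((norm_nonneg _).trans (hM₁ q.1))
    · rw [hψ₂δ q.2 q.1 (by rwa [dist_eq_norm]), sub_self, mul_zero]
  obtain ⟨hint', hsymm⟩ := integral_integral_mul_sub_eq_neg_half
    (K := fun x z => (‖z - x‖ : ℂ) ^ (-s - (n : ℂ))) (fun x z => by rw [norm_sub_rev]) hint
  exact ⟨hint, hint', hsymm⟩

/-- formal self-adjointness of the max-norm Vladimirov derivative on `ℚ_p^n`:
for Schwartz–Bruhat functions `ψ₁, ψ₂` the (absolutely convergent) double integrals satisfy
`∫∫ ψ₁(x)(ψ₂(z) - ψ₂(x))|z-x|_n^{-s-n} = -(1/2)·∫∫ (ψ₁(z) - ψ₁(x))(ψ₂(z) - ψ₂(x))|z-x|_n^{-s-n}`. -/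
theorem vladimirov_self_adjoint_pi (n : ℕ) (hn : 1 ≤ n) (s : ℂ) (hs : 0 < s.re)
    (ψ₁ ψ₂ : (Fin n → ℚ_[p]) → ℂ)
    (hψ₁loc : IsLocallyConstant ψ₁) (hψ₁supp : HasCompactSupport ψ₁)
    (hψ₂loc : IsLocallyConstant ψ₂) (hψ₂supp : HasCompactSupport ψ₂) :
    Integrable (fun q : (Fin n → ℚ_[p]) × (Fin n → ℚ_[p]) =>
      ψ₁ q.1 * (ψ₂ q.2 - ψ₂ q.1) * (‖q.2 - q.1‖ : ℂ) ^ (-s - (n : ℂ)))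
      ((padicHaarPi p n).prod (padicHaarPi p n)) ∧
    Integrable (fun q : (Fin n → ℚ_[p]) × (Fin n → ℚ_[p]) =>
      (ψ₁ q.2 - ψ₁ q.1) * (ψ₂ q.2 - ψ₂ q.1) * (‖q.2 - q.1‖ : ℂ) ^ (-s - (n : ℂ)))
      ((padicHaarPi p n).prod (padicHaarPi p n)) ∧
    (∫ x, ∫ z, ψ₁ x * (ψ₂ z - ψ₂ x) * (‖z - x‖ : ℂ) ^ (-s - (n : ℂ))
        ∂(padicHaarPi p n) ∂(padicHaarPi p n))
      = -(1 / 2) *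
        ∫ x, ∫ z, (ψ₁ z - ψ₁ x) * (ψ₂ z - ψ₂ x) * (‖z - x‖ : ℂ) ^ (-s - (n : ℂ))
          ∂(padicHaarPi p n) ∂(padicHaarPi p n) :=
  vladimirov_self_adjoint_pi_general n s hs ψ₁ ψ₂ hψ₁loc hψ₁supp hψ₂loc hψ₂supp

end
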